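/- Let s > 0 and let Q₀ = [a₁, a₁ + s] × [a₂, a₂ + s] be an axis-aligned closed square of side s in ℝ². Let F be a finite family of axis-aligned closed squares in ℝ², each of side length at least s, such that the interiors of the members of F are pairwise disjoint, the interior of each member of F is disjoint from the interior of Q₀, and each member of F intersects Q₀. Then F has at most 8 members. Consequently, a box of a two-dimensional quad-tree together with all of its peer boxes comprises at most 9 boxes (the paper's claim that any box in two dimensions has at most nine peers, the box itself being included in its list of peers). -/
import Mathlib


/-- An axis-aligned closed square of side `t` with lower-left corner `p`. -/
def closedSquare (p : ℝ × ℝ) (t : ℝ) : Set (ℝ × ℝ) :=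
  Set.Icc p.1 (p.1 + t) ×ˢ Set.Icc p.2 (p.2 + t)

/-- The interior of an axis-aligned closed square of side `t` with lower-left
corner `p`. -/
def openSquare (p : ℝ × ℝ) (t : ℝ) : Set (ℝ × ℝ) :=
  Set.Ioo p.1 (p.1 + t) ×ˢ Set.Ioo p.2 (p.2 + t)

/-- Two intervals both crossing `b` strictly from the left overlap. -/
private lemma crossL (b x₁ t₁ x₂ t₂ : ℝ) (h1 : x₁ < b) (h2 : b ≤ x₁ + t₁)
    (h3 : x₂ < b) (h4 : b ≤ x₂ + t₂) :
    ∃ u, x₁ < u ∧ u < x₁ + t₁ ∧ x₂ < u ∧ u < x₂ + t₂ := by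
  have hm1 := le_max_left x₁ x₂
  have hm2 := le_max_right x₁ x₂
  have hm3 := max_lt h1 h3
  exact ⟨(max x₁ x₂ + b) / 2, by linarith, by linarith, by linarith, by linarith⟩

/-- Two intervals both crossing `b` strictly from the right overlap. -/
private lemma crossR (b x₁ t₁ x₂ t₂ : ℝ) (h1 : x₁ ≤ b) (h2 : b < x₁ + t₁)
    (h3 : x₂ ≤ b) (h4 : b < x₂ + t₂) :
    ∃ u, x₁ < u ∧ u < x₁ + t₁ ∧ x₂ < u ∧ u < x₂ + t₂ := by
  have hm1 := min_le_left (x₁ + t₁) (x₂ + t₂)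
  have hm2 := min_le_right (x₁ + t₁) (x₂ + t₂)
  have hm3 := lt_min h2 h4
  exact ⟨(b + min (x₁ + t₁) (x₂ + t₂)) / 2, by linarith, by linarith, by linarith,
    by linarith⟩

private lemma card_union_le_eight {α : Type*} [DecidableEq α]
    (A B C D E G H I : Finset α) (hA : A.card ≤ 1) (hB : B.card ≤ 1)
    (hC : C.card ≤ 1) (hD : D.card ≤ 1) (hE : E.card ≤ 1) (hG : G.card ≤ 1)
    (hH : H.card ≤ 1) (hI : I.card ≤ 1) :
    (A ∪ B ∪ C ∪ D ∪ E ∪ G ∪ H ∪ I).card ≤ 8 := by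
  have u1 := Finset.card_union_le A B
  have u2 := Finset.card_union_le (A ∪ B) C
  have u3 := Finset.card_union_le (A ∪ B ∪ C) D
  have u4 := Finset.card_union_le (A ∪ B ∪ C ∪ D) E
  have u5 := Finset.card_union_le (A ∪ B ∪ C ∪ D ∪ E) G
  have u6 := Finset.card_union_le (A ∪ B ∪ C ∪ D ∪ E ∪ G) H
  have u7 := Finset.card_union_le (A ∪ B ∪ C ∪ D ∪ E ∪ G ∪ H) I
  omega

set_option maxHeartbeats 1000000 in
/-- At most 8 interior-disjoint axis-aligned closed squares of side at least `s`,
each interior-disjoint from a given closed square `Q₀` of side `s`, can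
intersect `Q₀`; hence a box of a two-dimensional quad-tree has at most nine
peers (itself included). -/
theorem peer_boxes_at_most_eight
    (s : ℝ) (hs : 0 < s) (a : ℝ × ℝ)
    {ι : Type*} (F : Finset ι) (p : ι → ℝ × ℝ) (t : ι → ℝ)
    (ht : ∀ i ∈ F, s ≤ t i)
    (hdisj : ∀ i ∈ F, ∀ j ∈ F, i ≠ j →
      Disjoint (openSquare (p i) (t i)) (openSquare (p j) (t j)))
    (hdisj0 : ∀ i ∈ F, Disjoint (openSquare (p i) (t i)) (openSquare a s))
    (hmeet : ∀ i ∈ F, (closedSquare (p i) (t i) ∩ closedSquare a s).Nonempty) :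
    F.card ≤ 8 := by
  classical
  -- Each square touches the closed square `Q₀`.
  have touch : ∀ i ∈ F, (p i).1 ≤ a.1 + s ∧ a.1 ≤ (p i).1 + t i ∧
      (p i).2 ≤ a.2 + s ∧ a.2 ≤ (p i).2 + t i := by
    intro i hi
    obtain ⟨q, hq1, hq2⟩ := hmeet i hi
    simp only [closedSquare, Set.mem_prod, Set.mem_Icc] at hq1 hq2
    exact ⟨by linarith [hq1.1.1, hq2.1.2], by linarith [hq1.1.2, hq2.1.1],
      by linarith [hq1.2.1, hq2.2.2], by linarith [hq1.2.2, hq2.2.1]⟩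
  -- No common interior point for two distinct members of `F`.
  have nov : ∀ i ∈ F, ∀ j ∈ F, i ≠ j → ∀ u v : ℝ,
      (p i).1 < u → u < (p i).1 + t i → (p i).2 < v → v < (p i).2 + t i →
      (p j).1 < u → u < (p j).1 + t j → (p j).2 < v → v < (p j).2 + t j → False := by
    intro i hi j hj hne u v h1 h2 h3 h4 h5 h6 h7 h8
    have hd := hdisj i hi j hj hne
    have hmi : (u, v) ∈ openSquare (p i) (t i) := by
      simp only [openSquare, Set.mem_prod, Set.mem_Ioo]
      exact ⟨⟨h1, h2⟩, h3, h4⟩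
    have hmj : (u, v) ∈ openSquare (p j) (t j) := by
      simp only [openSquare, Set.mem_prod, Set.mem_Ioo]
      exact ⟨⟨h5, h6⟩, h7, h8⟩
    exact Set.disjoint_left.mp hd hmi hmj
  -- Each square sticks out of `Q₀` in at least one of the four directions.
  have exh : ∀ i ∈ F, (p i).1 < a.1 ∨ a.1 + s < (p i).1 + t i ∨
      (p i).2 < a.2 ∨ a.2 + s < (p i).2 + t i := by
    intro i hi
    by_contra h
    push_neg at h
    obtain ⟨h1, h2, h3, h4⟩ := h
    have hti := ht i hi
    have hd := hdisj0 i hi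
    have hmi : (a.1 + s / 2, a.2 + s / 2) ∈ openSquare (p i) (t i) := by
      simp only [openSquare, Set.mem_prod, Set.mem_Ioo]
      exact ⟨⟨by linarith, by linarith⟩, by linarith, by linarith⟩
    have hma : (a.1 + s / 2, a.2 + s / 2) ∈ openSquare a s := by
      simp only [openSquare, Set.mem_prod, Set.mem_Ioo]
      exact ⟨⟨by linarith, by linarith⟩, by linarith, by linarith⟩
    exact Set.disjoint_left.mp hd hmi hma
  -- Generic bound on a filter with at most one member.
  have key : ∀ (D : ι → Prop) (inst : DecidablePred D),
      (∀ i ∈ F, ∀ j ∈ F, i ≠ j → D i → D j → False) →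
      (@Finset.filter ι D inst F).card ≤ 1 := by
    intro D inst hD
    refine Finset.card_le_one.mpr ?_
    intro i hi j hj
    simp only [Finset.mem_filter] at hi hj
    by_contra hne
    exact hD i hi.1 j hj.1 hne hi.2 hj.2
  -- The eight slots.
  have b0 : (F.filter (fun i => (p i).1 < a.1 ∧ (p i).2 < a.2)).card ≤ 1 := by
    refine key _ _ ?_
    intro i hi j hj hne hDi hDj
    obtain ⟨u, hu1, hu2, hu3, hu4⟩ :=
      crossL a.1 _ _ _ _ hDi.1 (touch i hi).2.1 hDj.1 (touch j hj).2.1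
    obtain ⟨v, hv1, hv2, hv3, hv4⟩ :=
      crossL a.2 _ _ _ _ hDi.2 (touch i hi).2.2.2 hDj.2 (touch j hj).2.2.2
    exact nov i hi j hj hne u v hu1 hu2 hv1 hv2 hu3 hu4 hv3 hv4
  have b1 : (F.filter (fun i => (p i).1 < a.1 ∧ a.2 + s < (p i).2 + t i)).card ≤ 1 := by
    refine key _ _ ?_
    intro i hi j hj hne hDi hDj
    obtain ⟨u, hu1, hu2, hu3, hu4⟩ :=
      crossL a.1 _ _ _ _ hDi.1 (touch i hi).2.1 hDj.1 (touch j hj).2.1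
    obtain ⟨v, hv1, hv2, hv3, hv4⟩ :=
      crossR (a.2 + s) _ _ _ _ (touch i hi).2.2.1 hDi.2 (touch j hj).2.2.1 hDj.2
    exact nov i hi j hj hne u v hu1 hu2 hv1 hv2 hu3 hu4 hv3 hv4
  have b2 : (F.filter (fun i => a.1 + s < (p i).1 + t i ∧ (p i).2 < a.2)).card ≤ 1 := by
    refine key _ _ ?_
    intro i hi j hj hne hDi hDj
    obtain ⟨u, hu1, hu2, hu3, hu4⟩ :=
      crossR (a.1 + s) _ _ _ _ (touch i hi).1 hDi.1 (touch j hj).1 hDj.1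
    obtain ⟨v, hv1, hv2, hv3, hv4⟩ :=
      crossL a.2 _ _ _ _ hDi.2 (touch i hi).2.2.2 hDj.2 (touch j hj).2.2.2
    exact nov i hi j hj hne u v hu1 hu2 hv1 hv2 hu3 hu4 hv3 hv4
  have b3 : (F.filter (fun i => a.1 + s < (p i).1 + t i ∧
      a.2 + s < (p i).2 + t i)).card ≤ 1 := by
    refine key _ _ ?_
    intro i hi j hj hne hDi hDj
    obtain ⟨u, hu1, hu2, hu3, hu4⟩ :=
      crossR (a.1 + s) _ _ _ _ (touch i hi).1 hDi.1 (touch j hj).1 hDj.1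
    obtain ⟨v, hv1, hv2, hv3, hv4⟩ :=
      crossR (a.2 + s) _ _ _ _ (touch i hi).2.2.1 hDi.2 (touch j hj).2.2.1 hDj.2
    exact nov i hi j hj hne u v hu1 hu2 hv1 hv2 hu3 hu4 hv3 hv4
  have b4 : (F.filter (fun i => (p i).1 < a.1 ∧ ¬(p i).2 < a.2 ∧
      ¬a.2 + s < (p i).2 + t i)).card ≤ 1 := by
    refine key _ _ ?_
    intro i hi j hj hne hDi hDj
    obtain ⟨u, hu1, hu2, hu3, hu4⟩ :=
      crossL a.1 _ _ _ _ hDi.1 (touch i hi).2.1 hDj.1 (touch j hj).2.1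
    have hyi1 : (p i).2 ≤ a.2 := by
      have := not_lt.mp hDi.2.2; have := ht i hi; linarith
    have hyi2 : a.2 < (p i).2 + t i := by
      have := not_lt.mp hDi.2.1; have := ht i hi; linarith
    have hyj1 : (p j).2 ≤ a.2 := by
      have := not_lt.mp hDj.2.2; have := ht j hj; linarith
    have hyj2 : a.2 < (p j).2 + t j := by
      have := not_lt.mp hDj.2.1; have := ht j hj; linarith
    obtain ⟨v, hv1, hv2, hv3, hv4⟩ := crossR a.2 _ _ _ _ hyi1 hyi2 hyj1 hyj2
    exact nov i hi j hj hne u v hu1 hu2 hv1 hv2 hu3 hu4 hv3 hv4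
  have b5 : (F.filter (fun i => a.1 + s < (p i).1 + t i ∧ ¬(p i).2 < a.2 ∧
      ¬a.2 + s < (p i).2 + t i)).card ≤ 1 := by
    refine key _ _ ?_
    intro i hi j hj hne hDi hDj
    obtain ⟨u, hu1, hu2, hu3, hu4⟩ :=
      crossR (a.1 + s) _ _ _ _ (touch i hi).1 hDi.1 (touch j hj).1 hDj.1
    have hyi1 : (p i).2 ≤ a.2 := by
      have := not_lt.mp hDi.2.2; have := ht i hi; linarith
    have hyi2 : a.2 < (p i).2 + t i := by
      have := not_lt.mp hDi.2.1; have := ht i hi; linarith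
    have hyj1 : (p j).2 ≤ a.2 := by
      have := not_lt.mp hDj.2.2; have := ht j hj; linarith
    have hyj2 : a.2 < (p j).2 + t j := by
      have := not_lt.mp hDj.2.1; have := ht j hj; linarith
    obtain ⟨v, hv1, hv2, hv3, hv4⟩ := crossR a.2 _ _ _ _ hyi1 hyi2 hyj1 hyj2
    exact nov i hi j hj hne u v hu1 hu2 hv1 hv2 hu3 hu4 hv3 hv4
  have b6 : (F.filter (fun i => ¬(p i).1 < a.1 ∧ ¬a.1 + s < (p i).1 + t i ∧
      (p i).2 < a.2)).card ≤ 1 := by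
    refine key _ _ ?_
    intro i hi j hj hne hDi hDj
    have hxi1 : (p i).1 ≤ a.1 := by
      have := not_lt.mp hDi.2.1; have := ht i hi; linarith
    have hxi2 : a.1 < (p i).1 + t i := by
      have := not_lt.mp hDi.1; have := ht i hi; linarith
    have hxj1 : (p j).1 ≤ a.1 := by
      have := not_lt.mp hDj.2.1; have := ht j hj; linarith
    have hxj2 : a.1 < (p j).1 + t j := by
      have := not_lt.mp hDj.1; have := ht j hj; linarith
    obtain ⟨u, hu1, hu2, hu3, hu4⟩ := crossR a.1 _ _ _ _ hxi1 hxi2 hxj1 hxj2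
    obtain ⟨v, hv1, hv2, hv3, hv4⟩ :=
      crossL a.2 _ _ _ _ hDi.2.2 (touch i hi).2.2.2 hDj.2.2 (touch j hj).2.2.2
    exact nov i hi j hj hne u v hu1 hu2 hv1 hv2 hu3 hu4 hv3 hv4
  have b7 : (F.filter (fun i => ¬(p i).1 < a.1 ∧ ¬a.1 + s < (p i).1 + t i ∧
      a.2 + s < (p i).2 + t i)).card ≤ 1 := by
    refine key _ _ ?_
    intro i hi j hj hne hDi hDj
    have hxi1 : (p i).1 ≤ a.1 := by
      have := not_lt.mp hDi.2.1; have := ht i hi; linarith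
    have hxi2 : a.1 < (p i).1 + t i := by
      have := not_lt.mp hDi.1; have := ht i hi; linarith
    have hxj1 : (p j).1 ≤ a.1 := by
      have := not_lt.mp hDj.2.1; have := ht j hj; linarith
    have hxj2 : a.1 < (p j).1 + t j := by
      have := not_lt.mp hDj.1; have := ht j hj; linarith
    obtain ⟨u, hu1, hu2, hu3, hu4⟩ := crossR a.1 _ _ _ _ hxi1 hxi2 hxj1 hxj2
    obtain ⟨v, hv1, hv2, hv3, hv4⟩ :=
      crossR (a.2 + s) _ _ _ _ (touch i hi).2.2.1 hDi.2.2 (touch j hj).2.2.1 hDj.2.2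
    exact nov i hi j hj hne u v hu1 hu2 hv1 hv2 hu3 hu4 hv3 hv4
  -- The slots cover `F`.
  have hsub : F ⊆
      F.filter (fun i => (p i).1 < a.1 ∧ (p i).2 < a.2) ∪
      F.filter (fun i => (p i).1 < a.1 ∧ a.2 + s < (p i).2 + t i) ∪
      F.filter (fun i => a.1 + s < (p i).1 + t i ∧ (p i).2 < a.2) ∪
      F.filter (fun i => a.1 + s < (p i).1 + t i ∧ a.2 + s < (p i).2 + t i) ∪
      F.filter (fun i => (p i).1 < a.1 ∧ ¬(p i).2 < a.2 ∧ ¬a.2 + s < (p i).2 + t i) ∪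
      F.filter (fun i => a.1 + s < (p i).1 + t i ∧ ¬(p i).2 < a.2 ∧
        ¬a.2 + s < (p i).2 + t i) ∪
      F.filter (fun i => ¬(p i).1 < a.1 ∧ ¬a.1 + s < (p i).1 + t i ∧ (p i).2 < a.2) ∪
      F.filter (fun i => ¬(p i).1 < a.1 ∧ ¬a.1 + s < (p i).1 + t i ∧
        a.2 + s < (p i).2 + t i) := by
    intro i hi
    have he := exh i hi
    simp only [Finset.mem_union, Finset.mem_filter]
    clear hdisj hdisj0 hmeet ht hs touch nov exh key b0 b1 b2 b3 b4 b5 b6 b7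
    by_cases hx1 : (p i).1 < a.1 <;> by_cases hx2 : a.1 + s < (p i).1 + t i <;>
      by_cases hy1 : (p i).2 < a.2 <;> by_cases hy2 : a.2 + s < (p i).2 + t i <;>
      tauto
  exact le_trans (Finset.card_le_card hsub)
    (card_union_le_eight _ _ _ _ _ _ _ _ b0 b1 b2 b3 b4 b5 b6 b7)
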